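/- Let D be an integral domain of characteristic zero with fraction field Q(D), and let A, B, w ∈ D[x,y]. Suppose Jac(A,B) is a unit of D[x,y] (i.e., a constant that is a unit of D) and Jac(A,w) = 0. Then the image of w in Q(D)[x,y] lies in Q(D)[Ā], the Q(D)-subalgebra of Q(D)[x,y] generated by the image Ā of A under the canonical map D[x,y] → Q(D)[x,y] induced by D → Q(D). -/

import Mathlib

open MvPolynomial

/-!
Over a field `F` of characteristic zero, write `Jac(a,b) = k` with `k ∈ Fˣ`. Eliminating between
`Jac(a,v) = 0` and `Jac(a,b) = k` gives `∇v = h ∇a` with `h = Jac(v,b)/k`, and equality of mixed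
partials of `v` turns this into `Jac(a,h) = 0`. Since `deg h < deg v`, induction on the total degree
gives `h = P(a)`; then `v - G(a)` has zero gradient for an antiderivative `G` of `P`, so it is a
constant. Over a domain `D` one passes to `Q(D)`, the Jacobian commuting with the coefficient map.
-/

/-- The Jacobian of two polynomials `p, q ∈ R[x,y]`:
`Jac(p,q) = (∂p/∂x)(∂q/∂y) − (∂p/∂y)(∂q/∂x)`. -/
noncomputable def Jac {R : Type*} [CommRing R]
    (p q : MvPolynomial (Fin 2) R) : MvPolynomial (Fin 2) R :=
  pderiv 0 p * pderiv 1 q - pderiv 1 p * pderiv 0 q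

theorem Polynomial.exists_derivative_eq {F : Type*} [Field F] [CharZero F] (p : Polynomial F) :
    ∃ q : Polynomial F, Polynomial.derivative q = p := by
  induction p using Polynomial.induction_on' with
  | add p q hp hq =>
    obtain ⟨P, rfl⟩ := hp
    obtain ⟨Q, rfl⟩ := hq
    exact ⟨P + Q, Polynomial.derivative_add⟩
  | monomial n a =>
    refine ⟨Polynomial.C (a / (n + 1)) * Polynomial.X ^ (n + 1), ?_⟩
    rw [Polynomial.derivative_C_mul_X_pow, Nat.add_sub_cancel, Nat.cast_add_one,
      div_mul_cancel₀ a n.cast_add_one_ne_zero, Polynomial.C_mul_X_pow_eq_monomial]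

namespace MvPolynomial

variable {σ R : Type*}

theorem pderiv_pderiv_comm [CommRing R] (i j : σ) (f : MvPolynomial σ R) :
    pderiv i (pderiv j f) = pderiv j (pderiv i f) := by
  suffices ⁅pderiv i, pderiv j⁆ = (0 : Derivation R (MvPolynomial σ R) (MvPolynomial σ R)) from
    sub_eq_zero.mp (by rw [← Derivation.commutator_apply, this, Derivation.zero_apply])
  refine derivation_ext fun k => ?_
  classical
  simp [Derivation.commutator_apply, pderiv_X, Pi.single_apply, apply_ite]

theorem totalDegree_pderiv_lt [CommSemiring R] {i : σ} {f : MvPolynomial σ R}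
    (hf : pderiv i f ≠ 0) : (pderiv i f).totalDegree < f.totalDegree := by
  obtain ⟨m, hm, hmax⟩ := Finset.exists_mem_eq_sup _ (support_nonempty.mpr hf)
    fun s : σ →₀ ℕ => s.sum fun _ e => e
  have hshift : m + Finsupp.single i 1 ∈ f.support := by
    rw [mem_support_iff] at hm ⊢
    exact fun h0 => hm (by rw [coeff_pderiv, h0, zero_mul])
  have hle := le_totalDegree hshift
  rw [Finsupp.sum_add_index' (fun _ => rfl) (fun _ _ _ => rfl),
    Finsupp.sum_single_index rfl] at hle
  rw [totalDegree, hmax]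
  omega

theorem eq_C_of_pderiv_eq_zero [CommRing R] [NoZeroDivisors R] [CharZero R]
    {f : MvPolynomial σ R} (h : ∀ i, pderiv i f = 0) : f = C (coeff 0 f) := by
  classical
  ext m
  rw [coeff_C]
  split_ifs with hm
  · rw [hm]
  obtain ⟨i, hi⟩ : ∃ i, m i ≠ 0 := by
    by_contra! hc
    exact hm (Finsupp.ext hc).symm
  have hcoeff := coeff_pderiv (i := i) f (m - Finsupp.single i 1)
  rw [h i, coeff_zero, tsub_add_cancel_of_le (Finsupp.single_le_iff.mpr (by omega))] at hcoeff
  exact (mul_eq_zero.mp hcoeff.symm).resolve_right (Nat.cast_add_one_ne_zero _)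

end MvPolynomial

section Jacobian

variable {R : Type*} [CommRing R]

theorem map_jac {S : Type*} [CommRing S] (φ : R →+* S) (p q : MvPolynomial (Fin 2) R) :
    map φ (Jac p q) = Jac (map φ p) (map φ q) := by
  simp only [Jac, map_sub, map_mul, pderiv_map]

theorem jac_mul_pderiv_of_jac_eq_zero {a b v : MvPolynomial (Fin 2) R} (hav : Jac a v = 0)
    (i : Fin 2) : Jac a b * pderiv i v = Jac v b * pderiv i a := by
  unfold Jac at hav ⊢
  match i with
  | 0 => linear_combination pderiv 0 b * hav
  | 1 => linear_combination pderiv 1 b * hav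

theorem jac_eq_zero_of_pderiv_eq_mul_pderiv {a h v : MvPolynomial (Fin 2) R}
    (hv : ∀ i, pderiv i v = h * pderiv i a) : Jac a h = 0 := by
  have hmixed := pderiv_pderiv_comm 0 1 v
  rw [hv 0, hv 1, Derivation.leibniz, Derivation.leibniz, pderiv_pderiv_comm 0 1 a] at hmixed
  unfold Jac
  linear_combination -hmixed

end Jacobian

section Field

variable {σ F : Type*} [Field F] [CharZero F]

theorem mem_adjoin_of_pderiv_eq_aeval_mul_pderiv {a v : MvPolynomial σ F} {p : Polynomial F}
    (hv : ∀ i, pderiv i v = Polynomial.aeval a p * pderiv i a) : v ∈ Algebra.adjoin F {a} := by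
  obtain ⟨q, rfl⟩ := p.exists_derivative_eq
  have hconst : ∀ i, pderiv i (v - Polynomial.aeval a q) = 0 := fun i => by
    rw [map_sub, Derivation.map_aeval, smul_eq_mul, hv i, sub_self]
  rw [← sub_add_cancel v (Polynomial.aeval a q), eq_C_of_pderiv_eq_zero hconst,
    Algebra.adjoin_singleton_eq_range_aeval]
  exact add_mem (Subalgebra.algebraMap_mem _ _) ⟨q, rfl⟩

theorem mem_adjoin_of_jac_eq_zero {a b v : MvPolynomial (Fin 2) F} (hab : IsUnit (Jac a b))
    (hav : Jac a v = 0) : v ∈ Algebra.adjoin F {a} := by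
  induction hdeg : v.totalDegree using Nat.strong_induction_on generalizing v with
  | _ n ih =>
    obtain ⟨h, hv⟩ : ∃ h, ∀ i, pderiv i v = h * pderiv i a := by
      obtain ⟨k, hk, hJac⟩ := isUnit_iff_eq_C_of_isReduced.mp hab
      refine ⟨C k⁻¹ * Jac v b, fun i => ?_⟩
      rw [mul_assoc, ← jac_mul_pderiv_of_jac_eq_zero hav, hJac, ← mul_assoc, ← C_mul,
        inv_mul_cancel₀ hk.ne_zero, C_1, one_mul]
    by_cases hconst : ∀ i, pderiv i v = 0
    · rw [eq_C_of_pderiv_eq_zero hconst]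
      exact Subalgebra.algebraMap_mem _ _
    obtain ⟨i, hi⟩ := not_forall.mp hconst
    have hdeg_lt : h.totalDegree < n := by
      have hmul := totalDegree_mul_of_isDomain (left_ne_zero_of_mul (hv i ▸ hi))
        (right_ne_zero_of_mul (hv i ▸ hi))
      have hpderiv := totalDegree_pderiv_lt hi
      rw [hv i] at hpderiv
      omega
    obtain ⟨p, rfl⟩ := Algebra.adjoin_singleton_eq_range_aeval F a ▸
      ih _ hdeg_lt (jac_eq_zero_of_pderiv_eq_mul_pderiv hv) rfl
    exact mem_adjoin_of_pderiv_eq_aeval_mul_pderiv hv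

end Field

/-- **CMW's theorem over an integral domain `D` of characteristic zero, fraction-field
version.** If `Jac(A,B)` is a unit of `D[x,y]` and `Jac(A,w) = 0`, then the image of
`w` in `Q(D)[x,y]` lies in `Q(D)[Ā]`, where `Ā` is the image of `A` under the
canonical map `D[x,y] → Q(D)[x,y]`. -/
theorem cmw_over_domain_fractionField {D : Type*} [CommRing D] [IsDomain D] [CharZero D]
    (A B w : MvPolynomial (Fin 2) D)
    (hAB : IsUnit (Jac A B)) (hAw : Jac A w = 0) :
    MvPolynomial.map (algebraMap D (FractionRing D)) w ∈
      Algebra.adjoin (FractionRing D)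
        {MvPolynomial.map (algebraMap D (FractionRing D)) A} := by
  refine mem_adjoin_of_jac_eq_zero (b := map (algebraMap D (FractionRing D)) B) ?_ ?_
  · rw [← map_jac]
    exact hAB.map _
  · rw [← map_jac, hAw, map_zero]
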